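/- The degenerate Eulerian polynomial A_{n,λ}(t) equals Σ_{k=0}^{n} A_k(t) λ^{n-k} S_1(n,k), where A_k(t) are the ordinary Eulerian polynomials and S_1(n,k) the (signed) Stirling numbers of the first kind. -/

import Mathlib

open Polynomial

/-- The `λ`-falling factorial `(t-1)_{m,λ}` as a polynomial in `t`. -/
noncomputable def degFallTsub1 (lam : ℚ) (m : ℕ) : Polynomial ℚ :=
  ∏ i ∈ Finset.range m, ((X : Polynomial ℚ) - 1 - C ((i : ℚ) * lam))

/-- The formal power series `log(1+t) = Σ_{m≥1} (-1)^{m+1} t^m / m` over ℚ. -/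
noncomputable def logOneAdd : PowerSeries ℚ :=
  PowerSeries.mk fun m => if m = 0 then 0 else (-1 : ℚ) ^ (m + 1) / m

/-- The signed Stirling numbers of the first kind, defined by
`(log(1+t))^k / k! = Σ_{n≥k} S₁(n,k) t^n/n!`. -/
noncomputable def S1 (n k : ℕ) : ℚ :=
  (n.factorial : ℚ) * PowerSeries.coeff n ((k.factorial : ℚ)⁻¹ • logOneAdd ^ k)

/-!
Put `y = λ⁻¹ log(1 + λx)`. Since `y^k / k! = Σₙ λ^{n-k} S₁(n,k) xⁿ / n!` and
`(s)_{n,λ} = Σₖ λ^{n-k} S₁(n,k) sᵏ`, substituting `y` for `x` in `exp((t-1)x)` gives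
`Σₘ (t-1)_{m,λ} xᵐ / m!`. Substituting `y` into the generating-function identity of the
Eulerian polynomials therefore yields the identity defining the degenerate ones, with `Aₙ(t)`
replaced by `Σₖ λ^{n-k} S₁(n,k) Aₖ(t)`; cancelling the nonzero factor
`Σₘ (t-1)_{m,λ} xᵐ / m! - t` identifies the two families.
-/

noncomputable section

namespace DegenerateEulerian

open PowerSeries Finset

theorem coeff_pow_of_lt {R : Type*} [CommSemiring R] {f : R⟦X⟧}
    (hf : constantCoeff f = 0) {n k : ℕ} (h : n < k) : PowerSeries.coeff n (f ^ k) = 0 :=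
  X_pow_dvd_iff.mp (pow_dvd_pow_of_dvd (X_dvd_iff.mpr hf) k) n h

theorem logOneAdd_eq_log : logOneAdd = log ℚ := by
  ext n
  simp [logOneAdd]

theorem constantCoeff_logOneAdd : constantCoeff logOneAdd = 0 := by
  rw [logOneAdd_eq_log, constantCoeff_log]

theorem coeff_logOneAdd_pow (n k : ℕ) :
    PowerSeries.coeff n (logOneAdd ^ k) = k.factorial * S1 n k / n.factorial := by
  rw [S1, map_smul, smul_eq_mul]
  field_simp

theorem S1_of_lt {n k : ℕ} (h : n < k) : S1 n k = 0 := by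
  simp [S1, coeff_pow_of_lt constantCoeff_logOneAdd h]

theorem S1_zero_right (n : ℕ) : S1 n 0 = if n = 0 then 1 else 0 := by
  rcases n with _ | n <;> simp [S1, PowerSeries.coeff_one]

theorem natCast_mul_S1_zero_right (n : ℕ) : (n : ℚ) * S1 n 0 = 0 := by
  rcases n with _ | n <;> simp [S1_zero_right]

theorem one_add_X_mul_derivative_log {A : Type*} [CommRing A] [Algebra ℚ A] :
    (1 + PowerSeries.X) * d⁄dX A (log A) = 1 := by
  ext n
  rw [deriv_log, add_mul, one_mul, map_add, PowerSeries.coeff_one]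
  rcases n with _ | n
  · simp
  · rw [coeff_succ_X_mul]
    simp [pow_succ]

theorem one_add_X_mul_derivative_logOneAdd_pow (k : ℕ) :
    (1 + PowerSeries.X) * d⁄dX ℚ (logOneAdd ^ (k + 1)) = ((k : ℚ) + 1) • logOneAdd ^ k := by
  rw [Derivation.leibniz_pow, Nat.add_sub_cancel, smul_eq_mul, mul_smul_comm, mul_left_comm,
    logOneAdd_eq_log, one_add_X_mul_derivative_log, mul_one, ← Nat.cast_smul_eq_nsmul ℚ]
  push_cast
  rfl

theorem S1_succ_succ (n k : ℕ) : S1 (n + 1) (k + 1) = S1 n k - n * S1 n (k + 1) := by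
  have h := congrArg (PowerSeries.coeff n) (one_add_X_mul_derivative_logOneAdd_pow k)
  rw [add_mul, one_mul, map_add, PowerSeries.coeff_smul, PowerSeries.coeff_derivative,
    smul_eq_mul] at h
  rcases n with _ | n <;>
    [rw [coeff_zero_X_mul, add_zero] at h;
     rw [coeff_succ_X_mul, PowerSeries.coeff_derivative] at h] <;>
  · simp only [coeff_logOneAdd_pow, Nat.factorial_succ] at h
    push_cast at h ⊢
    field_simp at h
    linear_combination h

theorem lam_pow_mul_S1_succ_succ (lam : ℚ) {n k : ℕ} (hk : k ≤ n) :
    lam ^ (n + 1 - (k + 1)) * S1 (n + 1) (k + 1) =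
      lam ^ (n - k) * S1 n k - n * lam * (lam ^ (n - (k + 1)) * S1 n (k + 1)) := by
  rcases hk.lt_or_eq with hk | rfl
  · rw [S1_succ_succ, Nat.add_sub_add_right, show n - k = n - (k + 1) + 1 by omega]
    ring
  · simp [S1_succ_succ, S1_of_lt (Nat.lt_succ_self k)]

theorem prod_range_sub_eq_sum_S1 {R : Type*} [CommRing R] [Algebra ℚ R] (lam : ℚ) (s : R)
    (n : ℕ) :
    ∏ i ∈ range n, (s - algebraMap ℚ R (i * lam)) =
      ∑ k ∈ range (n + 1), (lam ^ (n - k) * S1 n k) • s ^ k := by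
  induction n with
  | zero => simp [S1_zero_right]
  | succ n ih =>
    have hcoeff : ∀ k ∈ range (n + 1),
        (lam ^ (n + 1 - (k + 1)) * S1 (n + 1) (k + 1)) • s ^ (k + 1) =
          (lam ^ (n - k) * S1 n k) • s ^ (k + 1) -
            (n * lam) • ((lam ^ (n - (k + 1)) * S1 n (k + 1)) • s ^ (k + 1)) := by
      intro k hk
      rw [lam_pow_mul_S1_succ_succ lam (Nat.le_of_lt_succ (mem_range.mp hk)), sub_smul,
        smul_smul]
    rw [prod_range_succ, ih, sum_range_succ' _ (n + 1), S1_zero_right, if_neg n.succ_ne_zero,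
      mul_zero, zero_smul, add_zero, sum_congr rfl hcoeff, sum_sub_distrib, ← smul_sum, mul_sub,
      sum_mul]
    congr 1
    · exact sum_congr rfl fun k _ => by rw [smul_mul_assoc, pow_succ]
    · have hshift : ∑ k ∈ range (n + 1), (lam ^ (n - k) * S1 n k) • s ^ k =
          ∑ k ∈ range (n + 1), (lam ^ (n - (k + 1)) * S1 n (k + 1)) • s ^ (k + 1) +
            (lam ^ n * S1 n 0) • 1 := by
        rw [sum_range_succ' _ n, sum_range_succ _ n, S1_of_lt (Nat.lt_succ_self n), pow_zero,
          Nat.sub_zero, mul_zero, zero_smul, add_zero]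
      rw [mul_comm, ← Algebra.smul_def, hshift, smul_add, smul_smul,
        show (n : ℚ) * lam * (lam ^ n * S1 n 0) = 0 by
          linear_combination lam * lam ^ n * natCast_mul_S1_zero_right n,
        zero_smul, add_zero]

def logOneAddDivX : ℚ⟦X⟧ :=
  mk fun m => (-1 : ℚ) ^ m / (m + 1)

theorem X_mul_logOneAddDivX : PowerSeries.X * logOneAddDivX = logOneAdd := by
  ext n
  rcases n with _ | n
  · simp [logOneAdd]
  · rw [coeff_succ_X_mul]
    simp [logOneAdd, logOneAddDivX, pow_succ]

/-- `λ⁻¹ log(1 + λx)`, written so that `λ = 0` gives `x`. -/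
def scaledLog (lam : ℚ) : ℚ⟦X⟧ :=
  PowerSeries.X * rescale lam logOneAddDivX

theorem constantCoeff_scaledLog (lam : ℚ) : constantCoeff (scaledLog lam) = 0 := by
  simp [scaledLog]

theorem coeff_scaledLog_pow (lam : ℚ) (n k : ℕ) :
    PowerSeries.coeff n (scaledLog lam ^ k) =
      lam ^ (n - k) * PowerSeries.coeff n (logOneAdd ^ k) := by
  rw [scaledLog, ← X_mul_logOneAddDivX, mul_pow, mul_pow, ← map_pow,
    PowerSeries.coeff_X_pow_mul', PowerSeries.coeff_X_pow_mul', coeff_rescale]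
  split_ifs <;> simp

def egf {R : Type*} [Semiring R] [Module ℚ R] (b : ℕ → R) : R⟦X⟧ :=
  mk fun n => (n.factorial : ℚ)⁻¹ • b n

theorem egf_injective {R : Type*} [Semiring R] [Module ℚ R] :
    Function.Injective (egf : (ℕ → R) → R⟦X⟧) := by
  intro b b' h
  funext n
  have hn := congrArg (PowerSeries.coeff n) h
  simp only [egf, coeff_mk] at hn
  exact smul_right_injective R (inv_ne_zero (Nat.cast_ne_zero.mpr n.factorial_ne_zero)) hn

theorem coeff_subst_eq_sum_range {R : Type*} [CommRing R] {a : R⟦X⟧}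
    (ha : constantCoeff a = 0) (f : R⟦X⟧) (n : ℕ) :
    PowerSeries.coeff n (f.subst a) =
      ∑ d ∈ range (n + 1), PowerSeries.coeff d f * PowerSeries.coeff n (a ^ d) := by
  rw [coeff_subst' (HasSubst.of_constantCoeff_zero' ha)]
  refine finsum_eq_sum_of_support_subset _ fun d hd => ?_
  by_contra hdn
  rw [coe_range, Set.mem_Iio, not_lt] at hdn
  exact hd (by simp only [coeff_pow_of_lt ha (Nat.lt_of_succ_le hdn), smul_zero])

theorem subst_mul_sub_C_eq_C {R : Type*} [CommRing R] {a : R⟦X⟧} (ha : HasSubst a)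
    {f g : R⟦X⟧} {c d : R} (h : f * (g - PowerSeries.C c) = PowerSeries.C d) :
    f.subst a * (g.subst a - PowerSeries.C c) = PowerSeries.C d := by
  have h' := congrArg (subst a) h
  rwa [subst_mul ha, subst_sub ha, subst_C, subst_C] at h'

section ScaledLog

variable {R : Type*} [CommRing R] [Algebra ℚ R]

theorem constantCoeff_map_scaledLog (lam : ℚ) :
    constantCoeff (map (algebraMap ℚ R) (scaledLog lam)) = 0 := by
  rw [← coeff_zero_eq_constantCoeff_apply, PowerSeries.coeff_map,
    coeff_zero_eq_constantCoeff_apply, constantCoeff_scaledLog, map_zero]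

theorem hasSubst_map_scaledLog (lam : ℚ) : HasSubst (map (algebraMap ℚ R) (scaledLog lam)) :=
  HasSubst.of_constantCoeff_zero' (constantCoeff_map_scaledLog lam)

theorem subst_scaledLog_egf (lam : ℚ) (b : ℕ → R) :
    (egf b).subst (map (algebraMap ℚ R) (scaledLog lam)) =
      egf fun n => ∑ k ∈ range (n + 1), (lam ^ (n - k) * S1 n k) • b k := by
  ext n
  rw [coeff_subst_eq_sum_range (constantCoeff_map_scaledLog lam)]
  simp only [egf, coeff_mk, smul_sum]
  refine sum_congr rfl fun k _ => ?_
  rw [← map_pow, PowerSeries.coeff_map, coeff_scaledLog_pow, coeff_logOneAdd_pow,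
    smul_mul_assoc, mul_comm, ← Algebra.smul_def, smul_smul, smul_smul]
  congr 1
  field_simp

end ScaledLog

theorem egf_degFallTsub1 (lam : ℚ) :
    egf (degFallTsub1 lam) =
      (egf fun m => ((X : ℚ[X]) - 1) ^ m).subst (map (algebraMap ℚ ℚ[X]) (scaledLog lam)) := by
  rw [subst_scaledLog_egf]
  congr 1
  funext n
  rw [degFallTsub1, ← prod_range_sub_eq_sum_S1, Polynomial.algebraMap_eq]

theorem egf_degFallTsub1_sub_C_X_ne_zero (lam : ℚ) :
    egf (degFallTsub1 lam) - PowerSeries.C Polynomial.X ≠ 0 := by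
  intro h
  have h0 := congrArg PowerSeries.constantCoeff h
  simp only [egf, degFallTsub1, map_sub, coeff_mk, ← coeff_zero_eq_constantCoeff_apply] at h0
  simpa [Polynomial.coeff_one] using congrArg (Polynomial.coeff · 1) h0

end DegenerateEulerian

end

/-- `A_{n,λ}(t) = Σ_{k=0}^n A_k(t) λ^{n-k} S₁(n,k)`, where `A` is the family of
degenerate Eulerian polynomials and `B` the ordinary Eulerian polynomials,
each characterized by its exponential generating function. -/
theorem degenerate_eulerian_eq_sum_stirling (lam : ℚ)
    (A B : ℕ → Polynomial ℚ)
    (hA : (PowerSeries.mk fun n => (n.factorial : ℚ)⁻¹ • A n) *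
        ((PowerSeries.mk fun m => (m.factorial : ℚ)⁻¹ • degFallTsub1 lam m)
          - PowerSeries.C X)
      = PowerSeries.C (1 - X))
    (hB : (PowerSeries.mk fun n => (n.factorial : ℚ)⁻¹ • B n) *
        ((PowerSeries.mk fun m => (m.factorial : ℚ)⁻¹ • ((X : Polynomial ℚ) - 1) ^ m)
          - PowerSeries.C X)
      = PowerSeries.C (1 - X)) :
    ∀ n, A n = ∑ k ∈ Finset.range (n + 1), (lam ^ (n - k) * S1 n k) • B k := by
  open DegenerateEulerian in
  change egf A * (egf (degFallTsub1 lam) - PowerSeries.C X) = PowerSeries.C (1 - X) at hA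
  change egf B * (egf (fun m => ((X : ℚ[X]) - 1) ^ m) - PowerSeries.C X) = PowerSeries.C (1 - X)
    at hB
  have hB' := subst_mul_sub_C_eq_C (hasSubst_map_scaledLog lam) hB
  rw [← egf_degFallTsub1, subst_scaledLog_egf] at hB'
  exact congrFun (egf_injective <|
    mul_right_cancel₀ (egf_degFallTsub1_sub_C_X_ne_zero lam) (hA.trans hB'.symm))
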